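/- arXiv:1901.00902 — 3 statements merged into one kernel-verified Lean document; each statement's English description precedes it below -/
import Mathlib

section
/- Let α ∈ (0,1), F_p ∈ (0,1), F_n ∈ (0,1), and b ≥ 0, define g : ℝ → ℝ by g(x) = F_p·α^x + (1 − F_p)·α^{x + (b − x)/F_n}, and set b₂* = F_n·log_α(F_p / ((1 − F_p)·(1/F_n − 1))), where log_α t = (ln t)/(ln α). If 0 ≤ b₂* ≤ b, then g attains its minimum over the interval [0, b] uniquely at x* = b − b₂*, and the minimum value is g(x*) = α^{b − b₂*}·F_p/(1 − F_n). -/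
/-!
Writing `x = x₀ + u` with `x₀ = b - b₂*`, the false positive rate becomes
`g x = P α^u + Q α^(r u)` with `P, Q > 0` and `r = 1 - 1/F_n`, and the choice of `b₂*` is
exactly the first-order condition `P + Q r = 0`. Bounding each power from below by its tangent
line `α^v ≥ 1 + v log α` (strictly for `v ≠ 0`) then gives `g x > P + Q = g x₀` for every
`u ≠ 0`, so `x₀` is the unique minimiser even on all of `ℝ`.
-/

open Real

lemma one_add_mul_log_le_rpow {a : ℝ} (ha : 0 < a) (u : ℝ) : 1 + u * log a ≤ a ^ u := by
  rw [rpow_def_of_pos ha, add_comm, mul_comm]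
  exact add_one_le_exp _

lemma one_add_mul_log_lt_rpow {a u : ℝ} (ha : 0 < a) (ha1 : a ≠ 1) (hu : u ≠ 0) :
    1 + u * log a < a ^ u := by
  rw [rpow_def_of_pos ha, add_comm, mul_comm]
  exact add_one_lt_exp (mul_ne_zero (log_ne_zero_of_pos_of_ne_one ha ha1) hu)

lemma add_lt_mul_rpow_add_mul_rpow {a P Q r u : ℝ} (ha : 0 < a) (ha1 : a ≠ 1) (hP : 0 < P)
    (hQ : 0 ≤ Q) (hu : u ≠ 0) (hPQ : P + Q * r = 0) :
    P + Q < P * a ^ u + Q * a ^ (r * u) := by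
  have h₁ := mul_lt_mul_of_pos_left (one_add_mul_log_lt_rpow ha ha1 hu) hP
  have h₂ := mul_le_mul_of_nonneg_left (one_add_mul_log_le_rpow ha (r * u)) hQ
  have hsum : P * (1 + u * log a) + Q * (1 + r * u * log a) = P + Q := by
    linear_combination u * log a * hPQ
  linarith

/-- The false positive rate `g(x)` of the sandwiched filter with `x` bits per key up front. -/
noncomputable def sandwichedFPR (α Fp Fn b x : ℝ) : ℝ :=
  Fp * α ^ x + (1 - Fp) * α ^ (x + (b - x) / Fn)

lemma sandwichedFPR_add {α Fn : ℝ} (Fp b : ℝ) (hα : 0 < α) (hFn : Fn ≠ 0) (x₀ u : ℝ) :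
    sandwichedFPR α Fp Fn b (x₀ + u) = Fp * α ^ x₀ * α ^ u
      + (1 - Fp) * α ^ (x₀ + (b - x₀) / Fn) * α ^ ((1 - 1 / Fn) * u) := by
  have hexp : x₀ + u + (b - (x₀ + u)) / Fn = x₀ + (b - x₀) / Fn + (1 - 1 / Fn) * u := by
    field_simp; ring
  rw [sandwichedFPR, hexp, rpow_add hα, rpow_add hα]
  ring

lemma one_sub_mul_rpow_div_eq {α Fp Fn b₂ : ℝ} (hα : 0 < α) (hα1 : α ≠ 1) (hFp : 0 < Fp)
    (hFp1 : Fp < 1) (hFn : 0 < Fn) (hFn1 : Fn < 1)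
    (hb₂ : b₂ = Fn * (log (Fp / ((1 - Fp) * (1 / Fn - 1))) / log α)) :
    (1 - Fp) * α ^ (b₂ / Fn) = Fp * Fn / (1 - Fn) := by
  have hFp' := sub_pos.2 hFp1
  have hFn' := sub_pos.2 hFn1
  have hFn'' : 0 < 1 / Fn - 1 := by rw [one_div, sub_pos]; exact one_lt_inv_iff₀.2 ⟨hFn, hFn1⟩
  have hpos : 0 < Fp / ((1 - Fp) * (1 / Fn - 1)) := by positivity
  rw [hb₂, mul_div_cancel_left₀ _ hFn.ne', log_div_log, rpow_logb hα hα1 hpos]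
  field_simp

theorem sandwiched_learned_bloom_filter_optimum_general
    (α Fp Fn b : ℝ)
    (hα : α ∈ Set.Ioo (0 : ℝ) 1) (hFp : Fp ∈ Set.Ioo (0 : ℝ) 1)
    (hFn : Fn ∈ Set.Ioo (0 : ℝ) 1)
    (b₂ : ℝ)
    (hb₂ : b₂ = Fn * (Real.log (Fp / ((1 - Fp) * (1 / Fn - 1))) / Real.log α)) :
    (fun x : ℝ => Fp * α ^ x + (1 - Fp) * α ^ (x + (b - x) / Fn)) (b - b₂)
        = α ^ (b - b₂) * Fp / (1 - Fn)
      ∧ ∀ x ∈ Set.Icc (0 : ℝ) b, x ≠ b - b₂ →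
        (fun x : ℝ => Fp * α ^ x + (1 - Fp) * α ^ (x + (b - x) / Fn)) (b - b₂)
          < (fun x : ℝ => Fp * α ^ x + (1 - Fp) * α ^ (x + (b - x) / Fn)) x := by
  change sandwichedFPR α Fp Fn b (b - b₂) = _ ∧ ∀ x ∈ _, _ →
    sandwichedFPR α Fp Fn b (b - b₂) < sandwichedFPR α Fp Fn b x
  obtain ⟨hα0, hα1⟩ := hα
  obtain ⟨hFp0, hFp1⟩ := hFp
  obtain ⟨hFn0, hFn1⟩ := hFn
  have hFn1' : 1 - Fn ≠ 0 := (sub_pos.2 hFn1).ne'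
  set x₀ := b - b₂
  set P := Fp * α ^ x₀
  set Q := P * Fn / (1 - Fn)
  have hQ : (1 - Fp) * α ^ (x₀ + (b - x₀) / Fn) = Q := by
    rw [sub_sub_cancel, rpow_add hα0, mul_left_comm, one_sub_mul_rpow_div_eq hα0 hα1.ne hFp0 hFp1
      hFn0 hFn1 hb₂]
    ring
  have hg (u : ℝ) :
      sandwichedFPR α Fp Fn b (x₀ + u) = P * α ^ u + Q * α ^ ((1 - 1 / Fn) * u) := by
    rw [sandwichedFPR_add Fp b hα0 hFn0.ne', hQ]
  have hbalance : P + Q * (1 - 1 / Fn) = 0 := by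
    simp only [Q]; field_simp; ring
  have hg₀ : sandwichedFPR α Fp Fn b x₀ = P + Q := by
    rw [← add_zero x₀, hg, mul_zero, rpow_zero, mul_one, mul_one]
  refine ⟨?_, fun x _ hx => ?_⟩
  · rw [hg₀]
    simp only [P, Q]
    field_simp
    ring
  · rw [hg₀, ← add_sub_cancel x₀ x, hg]
    exact add_lt_mul_rpow_add_mul_rpow hα0 hα1.ne (by positivity)
      (div_nonneg (by positivity) (sub_pos.2 hFn1).le) (sub_ne_zero.2 hx) hbalance

/-- For `α, F_p, F_n ∈ (0,1)`, `b ≥ 0`,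
`g(x) = F_p·α^x + (1 − F_p)·α^{x + (b − x)/F_n}` and
`b₂* = F_n·log_α (F_p / ((1 − F_p)(1/F_n − 1)))` with `log_α t = ln t / ln α`:
if `0 ≤ b₂* ≤ b` then `g` attains its minimum over `[0, b]` uniquely at `x* = b − b₂*`,
with minimum value `g(x*) = α^{b − b₂*}·F_p/(1 − F_n)`. -/
theorem sandwiched_learned_bloom_filter_optimum
    (α Fp Fn b : ℝ)
    (hα : α ∈ Set.Ioo (0 : ℝ) 1) (hFp : Fp ∈ Set.Ioo (0 : ℝ) 1)
    (hFn : Fn ∈ Set.Ioo (0 : ℝ) 1) (hb : 0 ≤ b)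
    (b₂ : ℝ)
    (hb₂ : b₂ = Fn * (Real.log (Fp / ((1 - Fp) * (1 / Fn - 1))) / Real.log α))
    (hb₂0 : 0 ≤ b₂) (hb₂b : b₂ ≤ b) :
    (fun x : ℝ => Fp * α ^ x + (1 - Fp) * α ^ (x + (b - x) / Fn)) (b - b₂)
        = α ^ (b - b₂) * Fp / (1 - Fn)
      ∧ ∀ x ∈ Set.Icc (0 : ℝ) b, x ≠ b - b₂ →
        (fun x : ℝ => Fp * α ^ x + (1 - Fp) * α ^ (x + (b - x) / Fn)) (b - b₂)
          < (fun x : ℝ => Fp * α ^ x + (1 - Fp) * α ^ (x + (b - x) / Fn)) x :=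
  sandwiched_learned_bloom_filter_optimum_general α Fp Fn b hα hFp hFn b₂ hb₂
end

section
/- Let α ∈ (0,1), F_p ∈ (0,1), F_n ∈ (0,1), b ≥ 0, m > 0, ζ ∈ ℝ, and set b₂* = F_n·log_α(F_p / ((1 − F_p)·(1/F_n − 1))), where log_α t = (ln t)/(ln α). Assume 0 ≤ b₂* ≤ b. Then α^{b − b₂*}·F_p/(1 − F_n) ≤ α^{b + ζ/m} if and only if ζ/m ≤ log_α(F_p/(1 − F_n)) − F_n·log_α(F_p / ((1 − F_p)·(1/F_n − 1))); in particular this condition on ζ/m does not depend on b. -/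
/-- For `α, F_p, F_n ∈ (0,1)`, `b ≥ 0`, `m > 0`, `ζ ∈ ℝ` and
`b₂* = F_n·log_α (F_p / ((1 − F_p)(1/F_n − 1)))` (where `log_α t = ln t / ln α`) with
`0 ≤ b₂* ≤ b`:  `α^{b − b₂*}·F_p/(1 − F_n) ≤ α^{b + ζ/m}` iff
`ζ/m ≤ log_α (F_p/(1 − F_n)) − F_n·log_α (F_p/((1 − F_p)(1/F_n − 1)))`;
in particular the condition on `ζ/m` does not depend on `b`. -/
theorem sandwiched_learned_bloom_filter_size_condition
    (α Fp Fn b m ζ : ℝ)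
    (hα : α ∈ Set.Ioo (0 : ℝ) 1) (hFp : Fp ∈ Set.Ioo (0 : ℝ) 1)
    (hFn : Fn ∈ Set.Ioo (0 : ℝ) 1) (hb : 0 ≤ b) (hm : 0 < m)
    (b₂ : ℝ)
    (hb₂ : b₂ = Fn * (Real.log (Fp / ((1 - Fp) * (1 / Fn - 1))) / Real.log α))
    (hb₂0 : 0 ≤ b₂) (hb₂b : b₂ ≤ b) :
    α ^ (b - b₂) * Fp / (1 - Fn) ≤ α ^ (b + ζ / m)
      ↔ ζ / m ≤ Real.log (Fp / (1 - Fn)) / Real.log α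
          - Fn * (Real.log (Fp / ((1 - Fp) * (1 / Fn - 1))) / Real.log α) := by
  obtain ⟨hα0, hα1⟩ := hα
  obtain ⟨hFp0, hFp1⟩ := hFp
  obtain ⟨hFn0, hFn1⟩ := hFn
  have hL : Real.log α < 0 := Real.log_neg hα0 hα1
  have h1Fn : 0 < 1 - Fn := by linarith
  have hpow : (0:ℝ) < α ^ (b - b₂) := Real.rpow_pos_of_pos hα0 _
  have hlhs : 0 < α ^ (b - b₂) * Fp / (1 - Fn) := by positivity
  have hrhs : 0 < α ^ (b + ζ / m) := Real.rpow_pos_of_pos hα0 _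
  rw [← Real.log_le_log_iff hlhs hrhs,
      Real.log_div (by positivity) (ne_of_gt h1Fn),
      Real.log_mul (ne_of_gt hpow) (ne_of_gt hFp0),
      Real.log_rpow hα0, Real.log_rpow hα0, ← hb₂,
      Real.log_div (ne_of_gt hFp0) (ne_of_gt h1Fn),
      le_sub_iff_add_le, le_div_iff_of_neg hL]
  constructor <;> intro h <;> nlinarith [h]
end

section
/- Let α ∈ (0,1), F_p ∈ (0,1), F_n ∈ (0,1), and b > 0, define g : ℝ → ℝ by g(x) = F_p·α^x + (1 − F_p)·α^{x + (b − x)/F_n}, and set b₂* = F_n·log_α(F_p / ((1 − F_p)·(1/F_n − 1))), where log_α t = (ln t)/(ln α). If 0 < b₂* < b, then g(b − b₂*) < g(0); that is, the optimally sandwiched learned Bloom filter has strictly smaller false positive rate than the learned Bloom filter that devotes all bm bits to the backup filter. -/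
/-!
Write `u = α^(b - b₂*)` and `s = 1 / F_n`. The choice of `b₂*` is exactly
`α^(b₂*/F_n) = F_p / ((1 - F_p)(s - 1))`, and with it both false positive rates become
elementary in `u`: `g(b - b₂*) = F_p·u + q·u` and `g(0) = F_p + q·u^s`, where
`q = (1 - F_p)·α^(b₂*/F_n)` satisfies `q(s - 1) = F_p`. The inequality between them is then
`q` times the strict Bernoulli inequality `1 + s(u - 1) < u^s`, valid as `u ≠ 1` and `s > 1`.
-/

open Real

lemma one_add_mul_sub_one_lt_rpow {u s : ℝ} (hu : 0 ≤ u) (hu1 : u ≠ 1) (hs : 1 < s) :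
    1 + s * (u - 1) < u ^ s := by
  simpa using one_add_mul_self_lt_rpow_one_add (by linarith) (sub_ne_zero.mpr hu1) hs

lemma add_mul_lt_add_mul_rpow {p q u s : ℝ} (hq : 0 < q) (hpq : q * (s - 1) = p)
    (hu : 0 ≤ u) (hu1 : u ≠ 1) (hs : 1 < s) :
    p * u + q * u < p + q * u ^ s := by
  have := mul_lt_mul_of_pos_left (one_add_mul_sub_one_lt_rpow hu hu1 hs) hq
  linear_combination this - (u - 1) * hpq

theorem sandwiching_strictly_improves_general
    (α Fp Fn b : ℝ)
    (hα : α ∈ Set.Ioo (0 : ℝ) 1) (hFp : Fp ∈ Set.Ioo (0 : ℝ) 1)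
    (hFn : Fn ∈ Set.Ioo (0 : ℝ) 1)
    (b₂ : ℝ)
    (hb₂ : b₂ = Fn * (Real.log (Fp / ((1 - Fp) * (1 / Fn - 1))) / Real.log α))
    (hb₂b : b₂ < b) :
    (fun x : ℝ => Fp * α ^ x + (1 - Fp) * α ^ (x + (b - x) / Fn)) (b - b₂)
      < (fun x : ℝ => Fp * α ^ x + (1 - Fp) * α ^ (x + (b - x) / Fn)) 0 := by
  obtain ⟨hα0, hα1⟩ := hα
  obtain ⟨hFp0, hFp1⟩ := hFp
  obtain ⟨hFn0, hFn1⟩ := hFn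
  have hs : 1 < 1 / Fn := by rw [lt_div_iff₀ hFn0]; linarith
  set T := Fp / ((1 - Fp) * (1 / Fn - 1))
  have hT : α ^ (b₂ / Fn) = T := by
    have hlogb : b₂ / Fn = logb α T := by rw [hb₂, logb]; field_simp
    rw [hlogb, rpow_logb hα0 hα1.ne (by unfold T; apply div_pos <;> nlinarith)]
  have hleft : α ^ (b - b₂ + (b - (b - b₂)) / Fn) = T * α ^ (b - b₂) := by
    rw [sub_sub_cancel, rpow_add hα0, hT, mul_comm]
  have hright : α ^ (0 + (b - 0) / Fn) = T * (α ^ (b - b₂)) ^ (1 / Fn) := by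
    rw [← rpow_mul hα0.le, ← hT, ← rpow_add hα0]
    congr 1
    field_simp
    ring
  have hu1 : α ^ (b - b₂) < 1 := rpow_lt_one hα0.le hα1 (by linarith)
  simp only [hleft, hright, rpow_zero, mul_one, ← mul_assoc]
  refine add_mul_lt_add_mul_rpow (by positivity) ?_ (by positivity) hu1.ne hs
  unfold T
  field_simp

/-- For `α, F_p, F_n ∈ (0,1)`, `b > 0`,
`g(x) = F_p·α^x + (1 − F_p)·α^{x + (b − x)/F_n}` and
`b₂* = F_n·log_α (F_p / ((1 − F_p)(1/F_n − 1)))` (where `log_α t = ln t / ln α`):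
if `0 < b₂* < b` then `g(b − b₂*) < g(0)`, i.e. the optimally sandwiched learned Bloom
filter has strictly smaller false positive rate than devoting all `bm` bits to the backup
filter. -/
theorem sandwiching_strictly_improves
    (α Fp Fn b : ℝ)
    (hα : α ∈ Set.Ioo (0 : ℝ) 1) (hFp : Fp ∈ Set.Ioo (0 : ℝ) 1)
    (hFn : Fn ∈ Set.Ioo (0 : ℝ) 1) (hb : 0 < b)
    (b₂ : ℝ)
    (hb₂ : b₂ = Fn * (Real.log (Fp / ((1 - Fp) * (1 / Fn - 1))) / Real.log α))
    (hb₂0 : 0 < b₂) (hb₂b : b₂ < b) :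
    (fun x : ℝ => Fp * α ^ x + (1 - Fp) * α ^ (x + (b - x) / Fn)) (b - b₂)
      < (fun x : ℝ => Fp * α ^ x + (1 - Fp) * α ^ (x + (b - x) / Fn)) 0 :=
  sandwiching_strictly_improves_general α Fp Fn b hα hFp hFn b₂ hb₂ hb₂b
end
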